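/- arXiv:1907.01061 — 3 statements merged into one kernel-verified Lean document; each statement's English description precedes it below -/
import Mathlib

section
/- Let θ₀ ∈ ℝ² be a unit vector, r₁ > 0, and x̃ ∈ ℝ² with |x̃ - θ₀| = r₁ and (x̃ - θ₀)·θ₀ > 0. Define θ₁ = θ₀ - (2 θ₀·(x̃-θ₀)/r₁²)(x̃-θ₀) and r₂ = |x̃ - θ₁|. Then r₂ = r₁ + 2((x̃-θ₀)·θ₀)/r₁, and in particular r₂ > r₁. -/
open scoped RealInnerProductSpace

theorem stmt1 (θ₀ x θ₁ : EuclideanSpace ℝ (Fin 2)) (r₁ r₂ : ℝ)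
    (hθ₀ : ‖θ₀‖ = 1) (hr : 0 < r₁) (hx : ‖x - θ₀‖ = r₁)
    (hpos : ⟪x - θ₀, θ₀⟫ > 0)
    (hθ₁ : θ₁ = θ₀ - (2 * ⟪θ₀, x - θ₀⟫ / r₁ ^ 2) • (x - θ₀))
    (hr₂ : r₂ = ‖x - θ₁‖) :
    r₂ = r₁ + 2 * ⟪x - θ₀, θ₀⟫ / r₁ ∧ r₂ > r₁ := by
  have hc : ⟪θ₀, x - θ₀⟫ = ⟪x - θ₀, θ₀⟫ := real_inner_comm _ _
  set c := ⟪x - θ₀, θ₀⟫ with hcdef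
  have hmain : x - θ₁ = (1 + 2 * c / r₁ ^ 2) • (x - θ₀) := by
    rw [hθ₁, hc]
    module
  have hcoef : 0 < 1 + 2 * c / r₁ ^ 2 := by positivity
  have hnorm : r₂ = (1 + 2 * c / r₁ ^ 2) * r₁ := by
    rw [hr₂, hmain, norm_smul, hx, Real.norm_eq_abs, abs_of_pos hcoef]
  have heq : r₂ = r₁ + 2 * c / r₁ := by
    rw [hnorm]; field_simp
  refine ⟨heq, ?_⟩
  rw [heq]
  have : 0 < 2 * c / r₁ := by positivity
  linarith
end

section
/- Let θ₀ ∈ ℝ² be a unit vector, r₁ > 0, x̃ with |x̃-θ₀| = r₁ and (x̃-θ₀)·θ₀ > 0, θ₁ = θ₀ - (2θ₀·(x̃-θ₀)/r₁²)(x̃-θ₀), and r₂ = |x̃-θ₁|. Then for every y ∈ ℝ² with |y - θ₁| = r₂, one has |y - θ₀| ≥ r₁, with equality if and only if y = x̃. -/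
open scoped RealInnerProductSpace

theorem stmt2 (θ₀ x θ₁ : EuclideanSpace ℝ (Fin 2)) (r₁ r₂ : ℝ)
    (hθ₀ : ‖θ₀‖ = 1) (hr : 0 < r₁) (hx : ‖x - θ₀‖ = r₁)
    (hpos : ⟪x - θ₀, θ₀⟫ > 0)
    (hθ₁ : θ₁ = θ₀ - (2 * ⟪θ₀, x - θ₀⟫ / r₁ ^ 2) • (x - θ₀))
    (hr₂ : r₂ = ‖x - θ₁‖) :
    ∀ y : EuclideanSpace ℝ (Fin 2), ‖y - θ₁‖ = r₂ →
      ‖y - θ₀‖ ≥ r₁ ∧ (‖y - θ₀‖ = r₁ ↔ y = x) := by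
  intro y hy
  set u := x - θ₀ with hu
  set c := 2 * ⟪θ₀, u⟫ / r₁ ^ 2 with hc
  have hcpos : 0 < c := by
    apply div_pos
    · have h := real_inner_comm θ₀ u
      nlinarith [hpos]
    · positivity
  have hxθ₁ : x - θ₁ = (1 + c) • u := by
    rw [hθ₁, hu]; module
  set v := y - θ₁ with hv
  have hvnorm : ‖v‖ = (1 + c) * r₁ := by
    rw [hy, hr₂, hxθ₁, norm_smul, hx, Real.norm_eq_abs, abs_of_pos (by linarith)]
  have hyθ₀ : y - θ₀ = v - c • u := by
    rw [hv, hθ₁]; module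
  clear_value u c v
  have key : ‖y - θ₀‖ ^ 2 = ‖v‖ ^ 2 - 2 * c * ⟪v, u⟫ + c ^ 2 * ‖u‖ ^ 2 := by
    rw [hyθ₀, norm_sub_sq_real, real_inner_smul_right, norm_smul, Real.norm_eq_abs,
      mul_pow, sq_abs]
    ring
  have CS : ⟪v, u⟫ ≤ ‖v‖ * ‖u‖ := real_inner_le_norm v u
  have hI : ⟪v, u⟫ ≤ (1 + c) * r₁ * r₁ := by rw [hvnorm, hx] at CS; linarith
  rw [hvnorm, hx] at key
  have hsq : r₁ ^ 2 ≤ ‖y - θ₀‖ ^ 2 := by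
    nlinarith [key, mul_nonneg hcpos.le (sub_nonneg.mpr hI)]
  have hge : ‖y - θ₀‖ ≥ r₁ := by
    nlinarith [norm_nonneg (y - θ₀), hsq, hr]
  refine ⟨hge, ?_, ?_⟩
  · intro heq
    have heq2 : ‖y - θ₀‖ ^ 2 = r₁ ^ 2 := by rw [heq]
    have h3 : 2 * c * ⟪v, u⟫ = 2 * c * ((1 + c) * r₁ * r₁) := by
      linear_combination key - heq2
    have hinner : ⟪v, u⟫ = ‖v‖ * ‖u‖ := by
      rw [hvnorm, hx]
      exact mul_left_cancel₀ (show (2 * c : ℝ) ≠ 0 by positivity) h3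
    have := (inner_eq_norm_mul_iff_real).mp hinner
    -- ‖u‖ • v = ‖v‖ • u
    rw [hx, hvnorm] at this
    have hveq : v = (1 + c) • u := by
      have h2 : r₁ • v = r₁ • ((1 + c) • u) := by
        rw [this, smul_smul]; ring_nf
      exact smul_right_injective _ (ne_of_gt hr) h2
    have : y - θ₁ = x - θ₁ := by rw [← hv, hveq, hxθ₁]
    exact sub_left_injective this
  · intro heq
    rw [heq, ← hu, hx]
end

section
/- Let u : ℝ × ℝ² → ℝ be smooth and satisfy u_tt = Δu on the region { (t,x,y) : x² + y² > ρ² } for some ρ > 0. For R > ρ + r (r > 0 fixed) define P(t, θ, R) = (1/2π) ∫₀^{2π} u(t, R cos θ + r cos α, R sin θ + r sin α) dα. Then P satisfies the 2D wave equation in polar coordinates: P_tt = (1/R)(R P_R)_R + (1/R²) P_θθ. -/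
open MeasureTheory intervalIntegral Metric

noncomputable section WaveHelpers

abbrev E3 := ℝ × ℝ × ℝ

def Vv (r α : ℝ) : E3 := (0, r * Real.cos α, r * Real.sin α)

lemma contVv (r : ℝ) : Continuous (Vv r) := by
  unfold Vv; fun_prop

def Jint (r : ℝ) (w : E3 → ℝ) (p : E3) : ℝ := ∫ α in (0:ℝ)..(2*Real.pi), w (p + Vv r α)

def Dd (e : E3) (w : E3 → ℝ) : E3 → ℝ := fun p => fderiv ℝ w p e

lemma smooth_Dd (e : E3) {w : E3 → ℝ} (hw : ContDiff ℝ (⊤ : ℕ∞) w) : ContDiff ℝ (⊤ : ℕ∞) (Dd e w) :=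
  (hw.fderiv_right (m := (⊤ : ℕ∞)) (by simp)).clm_apply contDiff_const

lemma Jint_hasFDerivAt {r : ℝ} {w : E3 → ℝ} (hw : ContDiff ℝ (⊤ : ℕ∞) w) (p : E3) :
    HasFDerivAt (Jint r w) (∫ α in (0:ℝ)..(2*Real.pi), fderiv ℝ w (p + Vv r α)) p := by
  have hC : Continuous (fderiv ℝ w) := (hw.fderiv_right (m := (⊤ : ℕ∞)) (by simp)).continuous
  obtain ⟨C, hC2⟩ := (isCompact_closedBall p (1 + (1 + |r|))).exists_bound_of_continuousOn
    (hC.continuousOn)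
  have hball : ∀ x ∈ ball p 1, ∀ α : ℝ, x + Vv r α ∈ closedBall p (1 + (1 + |r|)) := by
    intro x hx α
    have h1 : dist (x + Vv r α) x ≤ 1 + |r| := by
      simp only [dist_eq_norm, add_sub_cancel_left, Vv, Prod.norm_def, norm_zero]
      have : |r * Real.cos α| ≤ |r| := by
        rw [abs_mul]; nlinarith [abs_nonneg r, Real.abs_cos_le_one α, abs_nonneg (Real.cos α)]
      have : |r * Real.sin α| ≤ |r| := by
        rw [abs_mul]; nlinarith [abs_nonneg r, Real.abs_sin_le_one α, abs_nonneg (Real.sin α)]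
      simp only [Real.norm_eq_abs, max_le_iff]
      exact ⟨by positivity, by linarith, by linarith⟩
    calc dist (x + Vv r α) p ≤ dist (x + Vv r α) x + dist x p := dist_triangle _ _ _
      _ ≤ (1 + |r|) + 1 := add_le_add h1 (le_of_lt (mem_ball.mp hx))
      _ ≤ 1 + (1 + |r|) := by linarith
  apply intervalIntegral.hasFDerivAt_integral_of_dominated_of_fderiv_le
    (F' := fun x α => fderiv ℝ w (x + Vv r α)) (bound := fun _ => C) (s := ball p 1) (ball_mem_nhds p one_pos)
  · filter_upwards with x
    exact ((hw.continuous.comp (continuous_const.add (contVv r))).aestronglyMeasurable)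
  · exact ((hw.continuous.comp (continuous_const.add (contVv r))).intervalIntegrable _ _)
  · exact (hC.comp (continuous_const.add (contVv r))).aestronglyMeasurable
  · filter_upwards with α _ x hx
    exact hC2 _ (hball x hx α)
  · exact intervalIntegrable_const
  · filter_upwards with α _ x hx
    have h1 : HasFDerivAt (fun y : E3 => y + Vv r α) (ContinuousLinearMap.id ℝ E3) x :=
      (hasFDerivAt_id x).add_const _
    have := ((hw.differentiable (by simp) (x + Vv r α)).hasFDerivAt).comp x h1
    simpa [Function.comp_def] using this


lemma Dd_Jint {r : ℝ} {w : E3 → ℝ} (hw : ContDiff ℝ (⊤ : ℕ∞) w) (e : E3) :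
    Dd e (Jint r w) = Jint r (Dd e w) := by
  funext p
  have h := Jint_hasFDerivAt (r := r) hw p
  have hint : IntervalIntegrable (fun α => fderiv ℝ w (p + Vv r α)) volume 0 (2*Real.pi) :=
    (((hw.fderiv_right (m := (⊤ : ℕ∞)) (by simp)).continuous).comp
      (continuous_const.add (contVv r))).intervalIntegrable _ _
  show fderiv ℝ (Jint r w) p e = _
  rw [h.fderiv, ContinuousLinearMap.intervalIntegral_apply hint]
  rfl


lemma hasDerivAt_comp_smooth {w : E3 → ℝ} (hw : ContDiff ℝ (⊤ : ℕ∞) w) {γ : ℝ → E3} {v : E3} {s : ℝ}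
    (hγ : HasDerivAt γ v s) : HasDerivAt (fun x => w (γ x)) (Dd v w (γ s)) s :=
  ((hw.differentiable (by simp) _).hasFDerivAt).comp_hasDerivAt s hγ

lemma vec_decomp (a b c : ℝ) :
    ((a, b, c) : E3) = a • ((1:ℝ), (0:ℝ), (0:ℝ)) + b • ((0:ℝ), (1:ℝ), (0:ℝ))
      + c • ((0:ℝ), (0:ℝ), (1:ℝ)) := by
  simp [Prod.ext_iff]

lemma fderiv_decomp {w : E3 → ℝ} {p : E3} (h : DifferentiableAt ℝ w p) (a b c : ℝ) :
    fderiv ℝ w p (a, b, c) = a * Dd ((1:ℝ), (0:ℝ), (0:ℝ)) w p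
      + b * Dd ((0:ℝ), (1:ℝ), (0:ℝ)) w p + c * Dd ((0:ℝ), (0:ℝ), (1:ℝ)) w p := by
  rw [vec_decomp, map_add, map_add, _root_.map_smul, _root_.map_smul, _root_.map_smul]
  simp [Dd, smul_eq_mul]

lemma hasDerivAt_Jint_comp {r : ℝ} {w : E3 → ℝ} (hw : ContDiff ℝ (⊤ : ℕ∞) w) {γ : ℝ → E3}
    {a b c : ℝ} {s : ℝ} (hγ : HasDerivAt γ (a, b, c) s) :
    HasDerivAt (fun x => Jint r w (γ x))
      (a * Jint r (Dd ((1:ℝ), (0:ℝ), (0:ℝ)) w) (γ s)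
        + b * Jint r (Dd ((0:ℝ), (1:ℝ), (0:ℝ)) w) (γ s)
        + c * Jint r (Dd ((0:ℝ), (0:ℝ), (1:ℝ)) w) (γ s)) s := by
  have h := Jint_hasFDerivAt (r := r) hw (γ s)
  have h2 := h.comp_hasDerivAt s hγ
  have h3 : (∫ α in (0:ℝ)..(2*Real.pi), fderiv ℝ w (γ s + Vv r α)) (a, b, c)
      = fderiv ℝ (Jint r w) (γ s) (a, b, c) := by rw [h.fderiv]
  rw [h3, fderiv_decomp h.differentiableAt] at h2
  simpa only [← congrFun (Dd_Jint hw _) (γ s), Function.comp_def] using h2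

end WaveHelpers

theorem stmt12 (u : ℝ → ℝ → ℝ → ℝ) (ρ r : ℝ) (hρ : 0 < ρ) (hr : 0 < r)
    (hu : ContDiff ℝ (⊤ : ℕ∞) (fun p : ℝ × ℝ × ℝ => u p.1 p.2.1 p.2.2))
    (hwave : ∀ t x y : ℝ, x ^ 2 + y ^ 2 > ρ ^ 2 →
      deriv (deriv (fun s => u s x y)) t =
        deriv (deriv (fun a => u t a y)) x + deriv (deriv (fun b => u t x b)) y)
    (P : ℝ → ℝ → ℝ → ℝ)
    (hP : ∀ t θ R : ℝ, P t θ R = (1 / (2 * Real.pi)) *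
      ∫ α in (0:ℝ)..(2 * Real.pi),
        u t (R * Real.cos θ + r * Real.cos α) (R * Real.sin θ + r * Real.sin α)) :
    ∀ t θ R : ℝ, R > ρ + r →
      deriv (deriv (fun s => P s θ R)) t =
        (1 / R) * deriv (fun S => S * deriv (fun S' => P t θ S') S) R
          + (1 / R ^ 2) * deriv (deriv (fun ψ => P t ψ R)) θ := by
  intro t θ R hR
  set f : E3 → ℝ := fun p => u p.1 p.2.1 p.2.2 with hf_def
  have hf : ContDiff ℝ (⊤ : ℕ∞) f := hu
  set cc : ℝ := 1 / (2 * Real.pi) with hcc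
  have Jf : ∀ T X Y : ℝ, Jint r f (T, X, Y)
      = ∫ α in (0:ℝ)..(2*Real.pi), u T (X + r * Real.cos α) (Y + r * Real.sin α) := by
    intro T X Y
    simp only [Jint, Vv, Prod.mk_add_mk, add_zero, hf_def]
  -- notation for basis
  have hRpos : (0:ℝ) < R := by linarith
  -- LHS
  have hcurve1 : ∀ X Y s : ℝ, HasDerivAt (fun s : ℝ => ((s, X, Y) : E3)) (1, 0, 0) s :=
    fun X Y s => (hasDerivAt_id s).prodMk ((hasDerivAt_const s X).prodMk (hasDerivAt_const s Y))
  have hPfun1 : (fun s => P s θ R) = fun s => cc * Jint r f (s, R * Real.cos θ, R * Real.sin θ) := by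
    funext s; rw [hP, Jf]
  have hD1 : deriv (fun s => P s θ R)
      = fun s => cc * (1 * Jint r (Dd (1,0,0) f) (s, R * Real.cos θ, R * Real.sin θ)
        + 0 * Jint r (Dd (0,1,0) f) (s, R * Real.cos θ, R * Real.sin θ)
        + 0 * Jint r (Dd (0,0,1) f) (s, R * Real.cos θ, R * Real.sin θ)) := by
    rw [hPfun1]
    funext s
    exact ((hasDerivAt_Jint_comp hf (hcurve1 _ _ s)).const_mul cc).deriv
  have hA1 := hasDerivAt_Jint_comp (r := r) (smooth_Dd ((1:ℝ),(0:ℝ),(0:ℝ)) hf)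
      (hcurve1 (R * Real.cos θ) (R * Real.sin θ) t)
  have hA2 := hasDerivAt_Jint_comp (r := r) (smooth_Dd ((0:ℝ),(1:ℝ),(0:ℝ)) hf)
      (hcurve1 (R * Real.cos θ) (R * Real.sin θ) t)
  have hA3 := hasDerivAt_Jint_comp (r := r) (smooth_Dd ((0:ℝ),(0:ℝ),(1:ℝ)) hf)
      (hcurve1 (R * Real.cos θ) (R * Real.sin θ) t)
  have hD11 := ((((hA1.const_mul 1).fun_add (hA2.const_mul 0)).fun_add (hA3.const_mul 0)).const_mul cc).deriv
  beta_reduce at hD11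
  -- theta part
  have hcurveT : ∀ ψ : ℝ, HasDerivAt (fun ψ : ℝ => ((t, R * Real.cos ψ, R * Real.sin ψ) : E3))
      (0, R * -Real.sin ψ, R * Real.cos ψ) ψ := fun ψ =>
    (hasDerivAt_const ψ t).prodMk (((Real.hasDerivAt_cos ψ).const_mul R).prodMk
      ((Real.hasDerivAt_sin ψ).const_mul R))
  have hPfunT : (fun ψ => P t ψ R) = fun ψ => cc * Jint r f (t, R * Real.cos ψ, R * Real.sin ψ) := by
    funext ψ; rw [hP, Jf]
  have hDT : deriv (fun ψ => P t ψ R)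
      = fun ψ => cc * (0 * Jint r (Dd (1,0,0) f) (t, R * Real.cos ψ, R * Real.sin ψ)
        + (R * -Real.sin ψ) * Jint r (Dd (0,1,0) f) (t, R * Real.cos ψ, R * Real.sin ψ)
        + (R * Real.cos ψ) * Jint r (Dd (0,0,1) f) (t, R * Real.cos ψ, R * Real.sin ψ)) := by
    rw [hPfunT]
    funext ψ
    exact ((hasDerivAt_Jint_comp hf (hcurveT ψ)).const_mul cc).deriv
  have hG1T := hasDerivAt_Jint_comp (r := r) (smooth_Dd ((1:ℝ),(0:ℝ),(0:ℝ)) hf) (hcurveT θ)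
  have hG2T := hasDerivAt_Jint_comp (r := r) (smooth_Dd ((0:ℝ),(1:ℝ),(0:ℝ)) hf) (hcurveT θ)
  have hG3T := hasDerivAt_Jint_comp (r := r) (smooth_Dd ((0:ℝ),(0:ℝ),(1:ℝ)) hf) (hcurveT θ)
  have hDTT := (((((hasDerivAt_const θ (0:ℝ)).fun_mul hG1T).fun_add
      ((((Real.hasDerivAt_sin θ).fun_neg.const_mul R)).fun_mul hG2T)).fun_add
      (((Real.hasDerivAt_cos θ).const_mul R).fun_mul hG3T)).const_mul cc).deriv
  beta_reduce at hDTT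
  -- R part
  have hcurveR : ∀ S : ℝ, HasDerivAt (fun S' : ℝ => ((t, S' * Real.cos θ, S' * Real.sin θ) : E3))
      (0, Real.cos θ, Real.sin θ) S := fun S =>
    (hasDerivAt_const S t).prodMk ((hasDerivAt_mul_const (Real.cos θ)).prodMk
      (hasDerivAt_mul_const (Real.sin θ)))
  have hPfunR : (fun S' => P t θ S') = fun S' => cc * Jint r f (t, S' * Real.cos θ, S' * Real.sin θ) := by
    funext S'; rw [hP, Jf]
  have hDR : deriv (fun S' => P t θ S')
      = fun S => cc * (0 * Jint r (Dd (1,0,0) f) (t, S * Real.cos θ, S * Real.sin θ)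
        + Real.cos θ * Jint r (Dd (0,1,0) f) (t, S * Real.cos θ, S * Real.sin θ)
        + Real.sin θ * Jint r (Dd (0,0,1) f) (t, S * Real.cos θ, S * Real.sin θ)) := by
    rw [hPfunR]
    funext S
    exact ((hasDerivAt_Jint_comp hf (hcurveR S)).const_mul cc).deriv
  have hG1R := hasDerivAt_Jint_comp (r := r) (smooth_Dd ((1:ℝ),(0:ℝ),(0:ℝ)) hf) (hcurveR R)
  have hG2R := hasDerivAt_Jint_comp (r := r) (smooth_Dd ((0:ℝ),(1:ℝ),(0:ℝ)) hf) (hcurveR R)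
  have hG3R := hasDerivAt_Jint_comp (r := r) (smooth_Dd ((0:ℝ),(0:ℝ),(1:ℝ)) hf) (hcurveR R)
  have hDRR := ((hasDerivAt_id' R).fun_mul ((((hG1R.const_mul (0:ℝ)).fun_add
      (hG2R.const_mul (Real.cos θ))).fun_add (hG3R.const_mul (Real.sin θ))).const_mul cc)).deriv
  beta_reduce at hDRR
  -- wave equation transfer
  have hcurve2 : ∀ T Y a : ℝ, HasDerivAt (fun a : ℝ => ((T, a, Y) : E3)) (0, 1, 0) a :=
    fun T Y a => (hasDerivAt_const a T).prodMk ((hasDerivAt_id a).prodMk (hasDerivAt_const a Y))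
  have hcurve3 : ∀ T X b : ℝ, HasDerivAt (fun b : ℝ => ((T, X, b) : E3)) (0, 0, 1) b :=
    fun T X b => (hasDerivAt_const b T).prodMk ((hasDerivAt_const b X).prodMk (hasDerivAt_id b))
  have hwave' : ∀ T X Y : ℝ, X ^ 2 + Y ^ 2 > ρ ^ 2 →
      Dd (1,0,0) (Dd (1,0,0) f) (T, X, Y)
        = Dd (0,1,0) (Dd (0,1,0) f) (T, X, Y) + Dd (0,0,1) (Dd (0,0,1) f) (T, X, Y) := by
    intro T X Y hXY
    have a1 : deriv (fun s => u s X Y) = fun s => Dd (1,0,0) f (s, X, Y) :=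
      funext fun s => (hasDerivAt_comp_smooth hf (hcurve1 X Y s)).deriv
    have a2 : deriv (deriv (fun s => u s X Y)) T = Dd (1,0,0) (Dd (1,0,0) f) (T, X, Y) := by
      rw [a1]; exact (hasDerivAt_comp_smooth (smooth_Dd _ hf) (hcurve1 X Y T)).deriv
    have b1 : deriv (fun a => u T a Y) = fun a => Dd (0,1,0) f (T, a, Y) :=
      funext fun a => (hasDerivAt_comp_smooth hf (hcurve2 T Y a)).deriv
    have b2 : deriv (deriv (fun a => u T a Y)) X = Dd (0,1,0) (Dd (0,1,0) f) (T, X, Y) := by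
      rw [b1]; exact (hasDerivAt_comp_smooth (smooth_Dd _ hf) (hcurve2 T Y X)).deriv
    have c1 : deriv (fun b => u T X b) = fun b => Dd (0,0,1) f (T, X, b) :=
      funext fun b => (hasDerivAt_comp_smooth hf (hcurve3 T X b)).deriv
    have c2 : deriv (deriv (fun b => u T X b)) Y = Dd (0,0,1) (Dd (0,0,1) f) (T, X, Y) := by
      rw [c1]; exact (hasDerivAt_comp_smooth (smooth_Dd _ hf) (hcurve3 T X Y)).deriv
    rw [← a2, ← b2, ← c2]
    exact hwave T X Y hXY
  have hGwave : Jint r (Dd (1,0,0) (Dd (1,0,0) f)) (t, R * Real.cos θ, R * Real.sin θ)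
      = Jint r (Dd (0,1,0) (Dd (0,1,0) f)) (t, R * Real.cos θ, R * Real.sin θ)
        + Jint r (Dd (0,0,1) (Dd (0,0,1) f)) (t, R * Real.cos θ, R * Real.sin θ) := by
    have hint2 : IntervalIntegrable
        (fun α => Dd ((0:ℝ),(1:ℝ),(0:ℝ)) (Dd ((0:ℝ),(1:ℝ),(0:ℝ)) f)
          ((t, R * Real.cos θ, R * Real.sin θ) + Vv r α)) volume 0 (2*Real.pi) :=
      (((smooth_Dd _ (smooth_Dd _ hf)).continuous).comp
        (continuous_const.add (contVv r))).intervalIntegrable _ _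
    have hint3 : IntervalIntegrable
        (fun α => Dd ((0:ℝ),(0:ℝ),(1:ℝ)) (Dd ((0:ℝ),(0:ℝ),(1:ℝ)) f)
          ((t, R * Real.cos θ, R * Real.sin θ) + Vv r α)) volume 0 (2*Real.pi) :=
      (((smooth_Dd _ (smooth_Dd _ hf)).continuous).comp
        (continuous_const.add (contVv r))).intervalIntegrable _ _
    show Jint r _ _ = Jint r _ _ + Jint r _ _
    unfold Jint
    rw [← intervalIntegral.integral_add hint2 hint3]
    apply intervalIntegral.integral_congr
    intro α _
    simp only [Vv, Prod.mk_add_mk, add_zero]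
    refine hwave' t _ _ ?_
    have h1 := Real.neg_one_le_cos (θ - α)
    rw [Real.cos_sub] at h1
    have expand : (R * Real.cos θ + r * Real.cos α) ^ 2 + (R * Real.sin θ + r * Real.sin α) ^ 2
        = R ^ 2 + r ^ 2 + 2 * R * r * (Real.cos θ * Real.cos α + Real.sin θ * Real.sin α) := by
      linear_combination (R ^ 2) * Real.sin_sq_add_cos_sq θ + (r ^ 2) * Real.sin_sq_add_cos_sq α
    rw [expand]
    nlinarith [h1, mul_pos hRpos hr, hρ, hr, hR]
  -- put everything together
  rw [hD1, hDT, hDR]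
  beta_reduce
  rw [hD11, hDTT, hDRR, hGwave]
  have hpy := Real.sin_sq_add_cos_sq θ
  have hRne : R ≠ 0 := ne_of_gt hRpos
  field_simp
  ring_nf
  linear_combination (-(Real.pi⁻¹ * R ^ 2) * (1/2) *
    (Jint r (Dd (0,1,0) (Dd (0,1,0) f)) (t, R * Real.cos θ, R * Real.sin θ) +
     Jint r (Dd (0,0,1) (Dd (0,0,1) f)) (t, R * Real.cos θ, R * Real.sin θ))) * hpy
end
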